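/- arXiv:2605.30306 — 3 statements merged into one kernel-verified Lean document; each statement's English description precedes it below -/
import Mathlib

section
/- Every eventually abelian periodic infinite word with period p and preperiod r is c-balanced for c = r + 2p. -/
/-- Number of occurrences of letter `x` in the factor of `s` of length `l`
starting at position `i`. -/
def cnt {σ : Type*} [DecidableEq σ] (s : ℕ → σ) (x : σ) (i l : ℕ) : ℕ :=
  ((Finset.range l).filter (fun k => s (i + k) = x)).card

section Aux
variable {σ : Type*} [DecidableEq σ] (s : ℕ → σ) (x : σ)

lemma cnt_le (i l : ℕ) : cnt s x i l ≤ l := by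
  calc cnt s x i l ≤ (Finset.range l).card := Finset.card_filter_le _ _
  _ = l := Finset.card_range l

lemma cnt_succ (i n : ℕ) :
    cnt s x i (n + 1) = cnt s x i n + if s (i + n) = x then 1 else 0 := by
  unfold cnt
  rw [Finset.range_add_one, Finset.filter_insert]
  split
  · rw [Finset.card_insert_of_notMem (by simp)]
  · simp

lemma cnt_add (i a b : ℕ) :
    cnt s x i (a + b) = cnt s x i a + cnt s x (i + a) b := by
  induction b with
  | zero => simp [cnt]
  | succ b ih =>
    rw [← add_assoc, cnt_succ, ih, cnt_succ, add_assoc i a b, add_assoc]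

variable {p r : ℕ} (hp : 0 < p)
  (habper : ∀ k : ℕ, ∀ x : σ, cnt s x (r + k * p) p = cnt s x r p)

include habper in
lemma cnt_mul (k : ℕ) : cnt s x r (k * p) = k * cnt s x r p := by
  induction k with
  | zero => simp [cnt]
  | succ k ih =>
    rw [add_mul, one_mul, cnt_add, ih, habper k x, add_mul, one_mul]

include hp habper in
/-- Two-sided linear approximation of the prefix count starting at `r`. -/
lemma cnt_prefix_bound (n : ℕ) :
    4 * (cnt s x r p : ℤ) * n - p ^ 2 ≤ 4 * p * (cnt s x r n : ℤ) ∧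
    4 * p * (cnt s x r n : ℤ) ≤ 4 * (cnt s x r p : ℤ) * n + p ^ 2 := by
  set C := cnt s x r p with hC
  obtain ⟨q, t, ht, hn⟩ : ∃ q t, t < p ∧ n = q * p + t := ⟨n / p, n % p, Nat.mod_lt _ hp, by rw [Nat.mul_comm]; exact (Nat.div_add_mod n p).symm⟩
  have hsplit : cnt s x r n = q * C + cnt s x (r + q * p) t := by
    rw [hn, cnt_add, cnt_mul s x habper]
  set e := cnt s x (r + q * p) t with he
  have het : e ≤ t := cnt_le s x _ _
  have heC : e + cnt s x (r + q * p + t) (p - t) = C := by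
    rw [he, ← cnt_add, Nat.add_sub_cancel' ht.le, hC, habper q x]
  have he2 : cnt s x (r + q * p + t) (p - t) ≤ p - t := cnt_le s x _ _
  have hCp : C ≤ p := cnt_le s x _ _
  -- integer versions
  have hZ : (cnt s x r n : ℤ) = q * C + e := by exact_mod_cast hsplit
  have hnZ : (n : ℤ) = q * p + t := by exact_mod_cast hn
  have h1 : (e : ℤ) ≤ t := by exact_mod_cast het
  have h2 : (t : ℤ) + C - p ≤ e := by
    have : (C : ℤ) - e ≤ p - t := by
      have h3 : (C : ℤ) = e + cnt s x (r + q * p + t) (p - t) := by exact_mod_cast heC.symm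
      have h4 : (cnt s x (r + q * p + t) (p - t) : ℤ) ≤ (p : ℤ) - t := by
        have := he2
        have h5 : ((p - t : ℕ) : ℤ) = (p : ℤ) - t := by omega
        calc (cnt s x (r + q * p + t) (p - t) : ℤ) ≤ ((p - t : ℕ) : ℤ) := by exact_mod_cast this
        _ = (p : ℤ) - t := h5
      omega
    omega
  have h3 : (C : ℤ) ≤ p := by exact_mod_cast hCp
  have h4 : (0 : ℤ) ≤ e := Int.ofNat_nonneg _
  have h5 : (0 : ℤ) ≤ C := Int.ofNat_nonneg _
  have h6 : (t : ℤ) < p := by exact_mod_cast ht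
  have h7 : (0 : ℤ) ≤ t := Int.ofNat_nonneg _
  have h8 : (0 : ℤ) ≤ q := Int.ofNat_nonneg _
  rw [hZ, hnZ]
  constructor
  · -- 4*C*(q*p+t) - p^2 ≤ 4*p*(q*C+e)  ⟺  4*C*t - p^2 ≤ 4*p*e
    rcases le_or_gt ((t : ℤ) + C) p with hcase | hcase
    · nlinarith [sq_nonneg ((t : ℤ) - C), mul_nonneg (mul_nonneg (by norm_num : (0:ℤ) ≤ 4) (show (0:ℤ) ≤ p by omega)) h4]
    · nlinarith [sq_nonneg ((t : ℤ) - C)]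
  · nlinarith [sq_nonneg ((p : ℤ) - 2 * e), mul_le_mul h1 (le_refl (C:ℤ)) h5 h7]
end Aux

section Main
variable {σ : Type*} [DecidableEq σ] (s : ℕ → σ) (x : σ) {p r : ℕ} (hp : 0 < p)
  (habper : ∀ k : ℕ, ∀ x : σ, cnt s x (r + k * p) p = cnt s x r p)

include hp habper in
lemma cnt_window_bound {i : ℕ} (hi : r ≤ i) (l : ℕ) :
    4 * (cnt s x r p : ℤ) * l - 2 * p ^ 2 ≤ 4 * p * (cnt s x i l : ℤ) ∧
    4 * p * (cnt s x i l : ℤ) ≤ 4 * (cnt s x r p : ℤ) * l + 2 * p ^ 2 := by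
  have hsplit : cnt s x r ((i - r) + l) = cnt s x r (i - r) + cnt s x i l := by
    rw [cnt_add, Nat.add_sub_cancel' hi]
  have hb1 := cnt_prefix_bound s x hp habper ((i - r) + l)
  have hb2 := cnt_prefix_bound s x hp habper (i - r)
  have hZ : (cnt s x r ((i - r) + l) : ℤ) = cnt s x r (i - r) + cnt s x i l := by
    exact_mod_cast hsplit
  have hcast : ((i - r + l : ℕ) : ℤ) = ((i - r : ℕ) : ℤ) + l := by push_cast; ring
  rw [hcast, hZ] at hb1
  constructor <;> nlinarith [hb1.1, hb1.2, hb2.1, hb2.2]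

include hp habper in
lemma one_side (i j l : ℕ) :
    (cnt s x i l : ℤ) - (cnt s x j l : ℤ) ≤ (r : ℤ) + 2 * p := by
  rcases le_or_gt l r with hl | hl
  · have h1 := cnt_le s x i l
    have h2 : (0:ℤ) ≤ cnt s x j l := Int.ofNat_nonneg _
    have h3 : (cnt s x i l : ℤ) ≤ l := by exact_mod_cast h1
    have h4 : (l : ℤ) ≤ r := by exact_mod_cast hl
    omega
  · set di := r - i with hdi
    set dj := r - j with hdj
    have hsi : cnt s x i l = cnt s x i di + cnt s x (i + di) (l - di) := by
      have h : di + (l - di) = l := by omega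
      rw [← h, cnt_add, h]
    have hsj : cnt s x j l = cnt s x j dj + cnt s x (j + dj) (l - dj) := by
      have h : dj + (l - dj) = l := by omega
      rw [← h, cnt_add, h]
    have hri : r ≤ i + di := by omega
    have hrj : r ≤ j + dj := by omega
    have hb1 := (cnt_window_bound s x hp habper hri (l - di)).2
    have hb2 := (cnt_window_bound s x hp habper hrj (l - dj)).1
    have hcast1 : ((l - di : ℕ) : ℤ) = (l : ℤ) - di := by omega
    have hcast2 : ((l - dj : ℕ) : ℤ) = (l : ℤ) - dj := by omega
    rw [hcast1] at hb1
    rw [hcast2] at hb2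
    have hAi : (cnt s x i di : ℤ) ≤ di := by exact_mod_cast cnt_le s x i di
    have hAj : (0:ℤ) ≤ (cnt s x j dj : ℤ) := Int.ofNat_nonneg _
    have hCp : (cnt s x r p : ℤ) ≤ p := by exact_mod_cast cnt_le s x r p
    have hC0 : (0:ℤ) ≤ (cnt s x r p : ℤ) := Int.ofNat_nonneg _
    have hdir : (di : ℤ) ≤ r := by exact_mod_cast Nat.sub_le r i
    have hdjr : (dj : ℤ) ≤ r := by exact_mod_cast Nat.sub_le r j
    have hdi0 : (0:ℤ) ≤ di := Int.ofNat_nonneg _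
    have hdj0 : (0:ℤ) ≤ dj := Int.ofNat_nonneg _
    have hpZ : (0:ℤ) < p := by exact_mod_cast hp
    have hZi : (cnt s x i l : ℤ) = cnt s x i di + cnt s x (i + di) (l - di) := by
      exact_mod_cast hsi
    have hZj : (cnt s x j l : ℤ) = cnt s x j dj + cnt s x (j + dj) (l - dj) := by
      exact_mod_cast hsj
    rw [hZi, hZj]
    nlinarith [mul_nonneg (sub_nonneg.2 hCp) (sub_nonneg.2 hdir),
      mul_nonneg hC0 (sub_nonneg.2 hdjr),
      mul_nonneg hC0 hdi0, mul_nonneg hC0 hdj0, sq_nonneg ((p:ℤ))]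

end Main

theorem stmt_8 {σ : Type*} [DecidableEq σ] [Fintype σ]
    (s : ℕ → σ) (p r : ℕ) (hp : 0 < p)
    (habper : ∀ k : ℕ, ∀ x : σ, cnt s x (r + k * p) p = cnt s x r p) :
    ∀ i j l : ℕ, ∀ x : σ,
      |(cnt s x i l : ℤ) - (cnt s x j l : ℤ)| ≤ (r : ℤ) + 2 * p := by
  intro i j l x
  rw [abs_sub_le_iff]
  exact ⟨one_side s x hp habper i j l, one_side s x hp habper j i l⟩
end

section
/- Let f be the morphism on {a,b}* with f(a) = ab and f(b) = bbaa, let h be the morphism on {1,…,6}* with h(1)=123, h(2)=456, h(3)=345, h(4)=634, h(5)=561, h(6)=212, and let τ be the coding τ(1)=τ(5)=τ(6)=a, τ(2)=τ(3)=τ(4)=b. Then for every m ∈ ℕ, τ(h^m(12)) = f^m(ab) and τ(h^m(3456)) = f^m(bbaa). In particular the fixed point f^ω(a) equals τ(h^ω(1)). -/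
/-- The extension of a substitution on letters to words. -/
def applyM {α : Type*} (g : α → List α) (w : List α) : List α := w.flatMap g

theorem applyM_iter_append {α : Type*} (g : α → List α) (m : ℕ) (u v : List α) :
    (applyM g)^[m] (u ++ v) = (applyM g)^[m] u ++ (applyM g)^[m] v := by
  induction m generalizing u v with
  | zero => simp
  | succ n ih =>
    simp only [Function.iterate_succ_apply, applyM, List.flatMap_append]
    exact ih _ _

/-- Alphabet `{a,b}` is `Fin 2` with `a = 0`, `b = 1`;
alphabet `{1,…,6}` is `Fin 6` with letter `i` being `i - 1`. -/
theorem stmt_10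
    (fm : Fin 2 → List (Fin 2)) (hf0 : fm 0 = [0, 1]) (hf1 : fm 1 = [1, 1, 0, 0])
    (hm : Fin 6 → List (Fin 6))
    (hh0 : hm 0 = [0, 1, 2]) (hh1 : hm 1 = [3, 4, 5]) (hh2 : hm 2 = [2, 3, 4])
    (hh3 : hm 3 = [5, 2, 3]) (hh4 : hm 4 = [4, 5, 0]) (hh5 : hm 5 = [1, 0, 1])
    (τ : Fin 6 → Fin 2)
    (hτ0 : τ 0 = 0) (hτ4 : τ 4 = 0) (hτ5 : τ 5 = 0)
    (hτ1 : τ 1 = 1) (hτ2 : τ 2 = 1) (hτ3 : τ 3 = 1) :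
    (∀ m : ℕ, List.map τ ((applyM hm)^[m] [0, 1]) = (applyM fm)^[m] [0, 1]) ∧
    (∀ m : ℕ, List.map τ ((applyM hm)^[m] [2, 3, 4, 5]) =
      (applyM fm)^[m] [1, 1, 0, 0]) ∧
    (∀ m : ℕ, List.map τ ((applyM hm)^[m] [0]) <+: (applyM fm)^[m + 1] [0]) ∧
    (∀ m : ℕ, 1 ≤ m → (applyM fm)^[m] [0] <+: List.map τ ((applyM hm)^[m] [0])) := by
  have key : ∀ m : ℕ,
      List.map τ ((applyM hm)^[m] [0, 1]) = (applyM fm)^[m] [0, 1] ∧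
      List.map τ ((applyM hm)^[m] [2, 3, 4, 5]) = (applyM fm)^[m] [1, 1, 0, 0] := by
    intro m
    induction m with
    | zero => simp [hτ0, hτ1, hτ2, hτ3, hτ4, hτ5]
    | succ n ih =>
      obtain ⟨ih1, ih2⟩ := ih
      have h1 : applyM hm [0, 1] = [0, 1] ++ [2, 3, 4, 5] := by
        simp [applyM, hh0, hh1]
      have h2 : applyM fm [0, 1] = [0, 1] ++ [1, 1, 0, 0] := by
        simp [applyM, hf0, hf1]
      have h3 : applyM hm [2, 3, 4, 5] =
          [2, 3, 4, 5] ++ ([2, 3, 4, 5] ++ ([0, 1] ++ [0, 1])) := by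
        simp [applyM, hh2, hh3, hh4, hh5]
      have h4 : applyM fm [1, 1, 0, 0] =
          [1, 1, 0, 0] ++ ([1, 1, 0, 0] ++ ([0, 1] ++ [0, 1])) := by
        simp [applyM, hf0, hf1]
      constructor
      · rw [Function.iterate_succ_apply, Function.iterate_succ_apply, h1, h2,
          applyM_iter_append, applyM_iter_append, List.map_append, ih1, ih2]
      · rw [Function.iterate_succ_apply, Function.iterate_succ_apply, h3, h4,
          applyM_iter_append, applyM_iter_append, applyM_iter_append,
          applyM_iter_append, applyM_iter_append, applyM_iter_append]
        simp only [List.map_append, ih1, ih2]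
  refine ⟨fun m => (key m).1, fun m => (key m).2, ?_, ?_⟩
  · intro m
    have : (applyM fm)^[m + 1] [0] = (applyM fm)^[m] [0, 1] := by
      rw [Function.iterate_succ_apply]
      congr 1
      simp [applyM, hf0]
    rw [this, ← (key m).1]
    have hsp : ((0 : Fin 6) :: [1]) = [0] ++ [1] := rfl
    rw [show ([0, 1] : List (Fin 6)) = [0] ++ [1] from rfl, applyM_iter_append,
      List.map_append]
    exact List.prefix_append _ _
  · intro m hm1
    obtain ⟨n, rfl⟩ := Nat.exists_eq_add_of_le hm1
    have hF : (applyM fm)^[1 + n] [0] = (applyM fm)^[n] [0, 1] := by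
      rw [add_comm, Function.iterate_succ_apply]
      congr 1
      simp [applyM, hf0]
    have hH : (applyM hm)^[1 + n] [0] = (applyM hm)^[n] [0, 1] ++ (applyM hm)^[n] [2] := by
      rw [add_comm, Function.iterate_succ_apply]
      rw [show applyM hm [0] = [0, 1] ++ [2] by simp [applyM, hh0]]
      exact applyM_iter_append _ _ _ _
    rw [hF, hH, List.map_append, (key n).1]
    exact List.prefix_append _ _
end

section
/- Let f be a morphism on {a,b}* prolongable on a with f(a) = uaav for some words u, v. For every sequence of positive integers k_1 > k_2 > … > k_t, the word f^{k_1}(u) f^{k_2}(u) ⋯ f^{k_t}(u) f^{k_t}(a) is a prefix of f^{k_1+1}(a). -/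
section
variable {α : Type*} (g : α → List α)

theorem applyM_append (x y : List α) :
    applyM g (x ++ y) = applyM g x ++ applyM g y :=
  List.flatMap_append

theorem applyM_singleton (a : α) : applyM g [a] = g a :=
  List.flatMap_singleton _ _

theorem iterate_applyM_append (n : ℕ) (x y : List α) :
    (applyM g)^[n] (x ++ y) = (applyM g)^[n] x ++ (applyM g)^[n] y := by
  induction n generalizing x y with
  | zero => rfl
  | succ n ih => simp only [Function.iterate_succ_apply, applyM_append, ih]

theorem List.IsPrefix.iterate_applyM {p q : List α} (h : p <+: q) (n : ℕ) :
    (applyM g)^[n] p <+: (applyM g)^[n] q := by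
  induction n generalizing p q with
  | zero => exact h
  | succ n ih => exact ih (h.flatMap g)

variable {g}

theorem iterate_applyM_prefix_of_le {a : α} (ha : [a] <+: g a) {m n : ℕ} (hmn : m ≤ n) :
    (applyM g)^[m] [a] <+: (applyM g)^[n] [a] := by
  induction n, hmn using Nat.le_induction with
  | base => exact List.prefix_refl _
  | succ n _ ih =>
    refine ih.trans ?_
    rw [Function.iterate_succ_apply, applyM_singleton]
    exact ha.iterate_applyM g n

theorem append_prefix_iterate_applyM_succ {u x : List α} {a : α} (hu : u ++ [a] <+: g a)
    {n : ℕ} (hx : x <+: (applyM g)^[n] [a]) :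
    (applyM g)^[n] u ++ x <+: (applyM g)^[n + 1] [a] := by
  have h := hu.iterate_applyM g n
  rw [iterate_applyM_append, ← applyM_singleton g, ← Function.iterate_succ_apply] at h
  exact ((List.prefix_append_right_inj _).mpr hx).trans h

theorem flatten_map_iterate_applyM_append_prefix {u : List α} {a : α} (hu : u ++ [a] <+: g a)
    (ha : [a] <+: g a) :
    ∀ (l : List ℕ) (hl : l ≠ []), l.IsChain (· > ·) →
      (l.map fun n => (applyM g)^[n] u).flatten ++ (applyM g)^[l.getLast hl] [a] <+:
        (applyM g)^[l.head hl + 1] [a]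
  | [n], _, _ => by simpa using append_prefix_iterate_applyM_succ hu (List.prefix_refl _)
  | n :: m :: l, _, hchain => by
    rw [List.isChain_cons_cons] at hchain
    have ih := flatten_map_iterate_applyM_append_prefix hu ha (m :: l) (List.cons_ne_nil _ _)
      hchain.2
    have := append_prefix_iterate_applyM_succ hu (ih.trans (iterate_applyM_prefix_of_le ha hchain.1))
    simpa [List.getLast_cons, List.append_assoc] using this

end

/-- Letters: `a = true`, `b = false`. -/
theorem stmt_11 (fm : Bool → List Bool)
    (hprol : ∃ w : List Bool, w ≠ [] ∧ fm true = true :: w)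
    (u v : List Bool) (hfa : fm true = u ++ [true, true] ++ v)
    (t : ℕ) (ht : 0 < t) (k : Fin t → ℕ)
    (hanti : StrictAnti k) :
    ((List.ofFn (fun i : Fin t => (applyM fm)^[k i] u)).flatten ++
        (applyM fm)^[k ⟨t - 1, by omega⟩] [true]) <+:
      (applyM fm)^[k ⟨0, ht⟩ + 1] [true] := by
  obtain ⟨w, -, hw⟩ := hprol
  have hu : u ++ [true] <+: fm true := ⟨true :: v, by simp [hfa]⟩
  have ha : [true] <+: fm true := ⟨w, hw.symm⟩
  have hne : List.ofFn k ≠ [] := by simp only [ne_eq, List.ofFn_eq_nil_iff]; omega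
  have hchain : (List.ofFn k).IsChain (· > ·) :=
    (List.pairwise_ofFn (R := (· > ·)).mpr fun _ _ hij => hanti hij).isChain
  have key := flatten_map_iterate_applyM_append_prefix hu ha (List.ofFn k) hne hchain
  rwa [List.map_ofFn, List.getLast_ofFn, List.head_ofFn] at key
end
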